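/- On n = 2 qubits, for all real α₁, α₂, α₁₂: exp(−j·(α₁·Z_{{0}} + α₂·Z_{{1}})) · CNOT_{0,1} · exp(−j·α₁₂·Z_{{1}}) · CNOT_{0,1} = exp(−j·(α₁·Z_{{0}} + α₂·Z_{{1}} + α₁₂·Z_{{0,1}})). -/

import Mathlib

open Matrix

noncomputable section

/-- The Pauli-Z monomial `Z_S`: the `2^n × 2^n` diagonal matrix (rows and columns indexed
by bitstrings `x : Fin n → Bool`) whose diagonal entry at `x` is
`(-1) ^ |{i ∈ S : x i = true}|`. -/
def PauliZ {n : ℕ} (S : Finset (Fin n)) : Matrix (Fin n → Bool) (Fin n → Bool) ℂ :=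
  Matrix.diagonal fun x => (-1 : ℂ) ^ (S.filter fun i => x i = true).card

/-- The action of `CNOT c t` on bitstrings: flip bit `t` when bit `c` is set. -/
def cnotFun {n : ℕ} (c t : Fin n) (x : Fin n → Bool) : Fin n → Bool :=
  Function.update x t (xor (x t) (x c))

/-- The CNOT gate with control `c` and target `t`: the permutation matrix sending the
standard basis vector `e_x` to `e_(cnotFun c t x)`. -/
def CNOT {n : ℕ} (c t : Fin n) : Matrix (Fin n → Bool) (Fin n → Bool) ℂ :=
  Matrix.of fun y x => if y = cnotFun c t x then 1 else 0

/-!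
Conjugating by the involution `CNOT₀₁` commutes with `exp` and turns `Z_{1}` into `Z_{0,1}`,
since the target bit becomes `x₀ ⊕ x₁`. So the circuit is
`exp(-j(α₁ Z_{0} + α₂ Z_{1})) · exp(-j α₁₂ Z_{0,1})`, and as Pauli-Z monomials are diagonal,
they commute and the two exponentials merge.
-/

theorem Matrix.exp_conj_of_mul_self_eq_one {m 𝔸 : Type*} [Fintype m] [DecidableEq m]
    [NormedRing 𝔸] [NormedAlgebra ℚ 𝔸] [CompleteSpace 𝔸]
    {U : Matrix m m 𝔸} (hU : U * U = 1) (A : Matrix m m 𝔸) :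
    NormedSpace.exp (U * A * U) = U * NormedSpace.exp A * U :=
  Matrix.exp_units_conj ⟨U, U, hU, hU⟩ A

section CNOT

variable {n : ℕ} {c t : Fin n}

theorem cnotFun_cnotFun (hct : c ≠ t) (x : Fin n → Bool) :
    cnotFun c t (cnotFun c t x) = x := by
  funext i
  rcases eq_or_ne i t with rfl | hi
  · simp [cnotFun, hct]
  · simp [cnotFun, hi]

theorem CNOT_mul_diagonal_mul_CNOT (hct : c ≠ t) (d : (Fin n → Bool) → ℂ) :
    CNOT c t * diagonal d * CNOT c t = diagonal fun x => d (cnotFun c t x) := by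
  ext y x
  simp only [mul_apply, CNOT, of_apply, diagonal_apply, mul_ite, mul_zero, mul_one, ite_mul,
    zero_mul, Finset.sum_ite_eq', Finset.mem_univ, if_true]
  rcases eq_or_ne y x with rfl | h
  · simp [cnotFun_cnotFun hct]
  · simp [h, cnotFun_cnotFun hct]

theorem CNOT_mul_CNOT (hct : c ≠ t) : CNOT c t * CNOT c t = 1 := by
  simpa using CNOT_mul_diagonal_mul_CNOT hct 1

theorem PauliZ_eq_diagonal_prod (S : Finset (Fin n)) :
    PauliZ S = diagonal fun x => ∏ i ∈ S, if x i then -1 else 1 := by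
  simp only [PauliZ, ← Finset.prod_const, Finset.prod_filter]

theorem CNOT_mul_PauliZ_target_mul_CNOT (hct : c ≠ t) :
    CNOT c t * PauliZ {t} * CNOT c t = PauliZ {c, t} := by
  simp only [PauliZ_eq_diagonal_prod, CNOT_mul_diagonal_mul_CNOT hct, Finset.prod_singleton,
    Finset.prod_pair hct, cnotFun, Function.update_self]
  congr 1
  funext x
  cases x c <;> cases x t <;> simp

theorem PauliZ_commute (S T : Finset (Fin n)) : Commute (PauliZ S) (PauliZ T) :=
  commute_diagonal _ _

end CNOT

/-- Correctness of the base template circuit `C₂` on two qubits: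
`exp(-j(α₁ Z_{{0}} + α₂ Z_{{1}})) · CNOT_{0,1} · exp(-j α₁₂ Z_{{1}}) · CNOT_{0,1}
  = exp(-j(α₁ Z_{{0}} + α₂ Z_{{1}} + α₁₂ Z_{{0,1}}))`. -/
theorem template_C2_correct (α₁ α₂ α₁₂ : ℝ) :
    NormedSpace.exp ((-Complex.I) •
        ((α₁ : ℂ) • PauliZ ({0} : Finset (Fin 2)) + (α₂ : ℂ) • PauliZ ({1} : Finset (Fin 2)))) *
      CNOT (0 : Fin 2) 1 *
      NormedSpace.exp ((-Complex.I * (α₁₂ : ℂ)) • PauliZ ({1} : Finset (Fin 2))) *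
      CNOT (0 : Fin 2) 1 =
    NormedSpace.exp ((-Complex.I) •
        ((α₁ : ℂ) • PauliZ ({0} : Finset (Fin 2)) + (α₂ : ℂ) • PauliZ ({1} : Finset (Fin 2)) +
          (α₁₂ : ℂ) • PauliZ ({0, 1} : Finset (Fin 2)))) := by
  set A := (-Complex.I) • ((α₁ : ℂ) • PauliZ ({0} : Finset (Fin 2)) + (α₂ : ℂ) • PauliZ {1})
  set B := (-Complex.I * (α₁₂ : ℂ)) • PauliZ ({0, 1} : Finset (Fin 2))
  have h01 : (0 : Fin 2) ≠ 1 := by decide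
  have hAB : Commute A B :=
    ((((PauliZ_commute _ _).smul_left _).add_left ((PauliZ_commute _ _).smul_left _)).smul_left
      _).smul_right _
  calc _ = NormedSpace.exp A * NormedSpace.exp B := by
        rw [mul_assoc, mul_assoc, ← mul_assoc (CNOT 0 1),
          ← Matrix.exp_conj_of_mul_self_eq_one (CNOT_mul_CNOT h01), Matrix.mul_smul,
          Matrix.smul_mul, CNOT_mul_PauliZ_target_mul_CNOT h01]
    _ = NormedSpace.exp (A + B) := (Matrix.exp_add_of_commute A B hAB).symm
    _ = _ := by
      congr 1
      simp only [A, B, smul_add, mul_smul]
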